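/- arXiv:1009.1512 — 2 statements merged into one kernel-verified Lean document; each statement's English description precedes it below -/
import Mathlib

section
/- For every 0 ≤ k ≤ n, the real matrix indexed by H_n × H_n with entries (x,y) ↦ K_k^n(d_H(x,y)) is symmetric positive semidefinite. -/
/-!
The matrix is a Gram matrix. For a `k`-subset `S` of coordinates let
`χ_S x = ∏_{i ∈ S} (-1)^{x_i}`; then `χ_S x χ_S y = (-1)^{|S ∩ D|}` with `D = {i | x_i ≠ y_i}`,
and sorting the `k`-subsets by `j = |S ∩ D|` gives
`∑_{|S| = k} χ_S x χ_S y = ∑_j (-1)^j C(|D|, j) C(n - |D|, k - j) = K_k^n(d_H(x,y))`.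
-/

open Finset
open scoped Matrix

/-- The Krawtchouk polynomial `K_k^n(t) = ∑_{j=0}^k (−1)^j C(t,j) C(n−t,k−j)`,
evaluated at a natural number `t`. -/
def krawtchouk (n k t : ℕ) : ℝ :=
  ∑ j ∈ Finset.range (k + 1),
    (-1 : ℝ) ^ j * (Nat.choose t j : ℝ) * (Nat.choose (n - t) (k - j) : ℝ)

namespace Finset

variable {α : Type*} [DecidableEq α]

theorem card_filter_powersetCard_card_filter_eq (s : Finset α) (p : α → Prop) [DecidablePred p]
    {k j : ℕ} (hj : j ≤ k) :
    #{u ∈ s.powersetCard k | #(u.filter p) = j}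
      = (#(s.filter p)).choose j * (#(s.filter fun a => ¬p a)).choose (k - j) := by
  have filter_union_eq {a b : Finset α} (ha : a ⊆ s.filter p) (hb : b ⊆ s.filter fun x => ¬p x) :
      (a ∪ b).filter p = a ∧ (a ∪ b).filter (fun x => ¬p x) = b := by
    constructor <;> ext x <;> have := @ha x <;> have := @hb x <;> simp_all <;> grind
  rw [← card_powersetCard, ← card_powersetCard, ← card_product]
  refine card_nbij' (fun u => (u.filter p, u.filter fun a => ¬p a)) (fun v => v.1 ∪ v.2)
    ?_ ?_ (fun u _ => filter_union_filter_not_eq p u) ?_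
  · intro u hu
    simp only [coe_filter, mem_powersetCard, Set.mem_ofPred_eq] at hu
    obtain ⟨⟨hus, rfl⟩, rfl⟩ := hu
    simp only [coe_product, Set.mem_prod, mem_coe, mem_powersetCard]
    refine ⟨⟨filter_subset_filter _ hus, trivial⟩, filter_subset_filter _ hus, ?_⟩
    have := card_filter_add_card_filter_not (s := u) p
    omega
  · rintro ⟨a, b⟩ hv
    simp only [coe_product, Set.mem_prod, mem_coe, mem_powersetCard] at hv
    obtain ⟨⟨ha, rfl⟩, hb, hbc⟩ := hv
    have hab : Disjoint a b := disjoint_filter_filter_not s s p |>.mono ha hb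
    simp only [coe_filter, mem_powersetCard, Set.mem_ofPred_eq, (filter_union_eq ha hb).1]
    refine ⟨⟨union_subset (ha.trans (filter_subset _ _)) (hb.trans (filter_subset _ _)), ?_⟩,
      trivial⟩
    rw [card_union_of_disjoint hab]
    omega
  · rintro ⟨a, b⟩ hv
    simp only [coe_product, Set.mem_prod, mem_coe, mem_powersetCard] at hv
    obtain ⟨⟨ha, -⟩, hb, -⟩ := hv
    exact Prod.ext (filter_union_eq ha hb).1 (filter_union_eq ha hb).2

theorem sum_powersetCard_neg_one_pow_card_filter (s : Finset α) (p : α → Prop)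
    [DecidablePred p] (k : ℕ) :
    ∑ u ∈ s.powersetCard k, (-1 : ℝ) ^ #(u.filter p) = krawtchouk #s k #(s.filter p) := by
  have hmaps : ∀ u ∈ s.powersetCard k, #(u.filter p) ∈ range (k + 1) := fun u hu =>
    mem_range_succ_iff.2 ((card_filter_le u p).trans (mem_powersetCard.1 hu).2.le)
  have hcompl : #(s.filter fun a => ¬p a) = #s - #(s.filter p) := by
    have := card_filter_add_card_filter_not (s := s) p
    omega
  rw [← sum_fiberwise_of_maps_to hmaps, krawtchouk]
  refine sum_congr rfl fun j hj => ?_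
  rw [sum_congr rfl fun u hu => by rw [(mem_filter.1 hu).2], sum_const,
    card_filter_powersetCard_card_filter_eq s p (mem_range_succ_iff.1 hj), hcompl, nsmul_eq_mul]
  push_cast
  ring

end Finset

noncomputable def walshChar {ι : Type*} (S : Finset ι) (x : ι → ZMod 2) : ℝ :=
  ∏ i ∈ S, (-1) ^ (x i).val

theorem neg_one_pow_val_mul_neg_one_pow_val (a b : ZMod 2) :
    (-1 : ℝ) ^ a.val * (-1) ^ b.val = if a ≠ b then -1 else 1 := by
  have zero_or_one : ∀ c : ZMod 2, c = 0 ∨ c = 1 := by decide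
  rcases zero_or_one a with rfl | rfl <;> rcases zero_or_one b with rfl | rfl <;>
    simp [ZMod.val_one]

theorem walshChar_mul_walshChar {ι : Type*} (S : Finset ι) (x y : ι → ZMod 2) :
    walshChar S x * walshChar S y = (-1) ^ #(S.filter fun i => x i ≠ y i) := by
  simp only [walshChar, ← prod_mul_distrib, neg_one_pow_val_mul_neg_one_pow_val, prod_ite,
    prod_const, one_pow, mul_one]

theorem krawtchouk_matrix_posSemidef_general (n k : ℕ) :
    (Matrix.of (fun x y : Fin n → ZMod 2 =>
      krawtchouk n k (hammingDist x y))).PosSemidef := by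
  let χ : Matrix ((univ : Finset (Fin n)).powersetCard k) (Fin n → ZMod 2) ℝ :=
    Matrix.of fun S x => walshChar (S : Finset (Fin n)) x
  have gram : Matrix.of (fun x y : Fin n → ZMod 2 => krawtchouk n k (hammingDist x y))
      = χᴴ * χ := by
    ext x y
    simp only [Matrix.of_apply, Matrix.mul_apply, Matrix.conjTranspose_apply, star_trivial, χ,
      walshChar_mul_walshChar]
    rw [sum_coe_sort (univ.powersetCard k) (fun S => (-1 : ℝ) ^ #(S.filter fun i => x i ≠ y i)),
      sum_powersetCard_neg_one_pow_card_filter, card_univ, Fintype.card_fin]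
    rfl
  exact gram ▸ Matrix.posSemidef_conjTranspose_mul_self χ

/-- For every `0 ≤ k ≤ n`, the matrix `(x,y) ↦ K_k^n(d_H(x,y))`, indexed by the binary
Hamming space `H_n`, is symmetric positive semidefinite. -/
theorem krawtchouk_matrix_posSemidef (n k : ℕ) (hk : k ≤ n) :
    (Matrix.of (fun x y : Fin n → ZMod 2 =>
      krawtchouk n k (hammingDist x y))).PosSemidef :=
  krawtchouk_matrix_posSemidef_general n k
end

section
/- Let C ⊆ H_n be a nonempty binary code and define its distance distribution x_i = (1/|C|)·|{(x,y) ∈ C² : d_H(x,y) = i}| for 0 ≤ i ≤ n. Then: (1) Σ_{i=0}^n K_k^n(i) x_i ≥ 0 for all 0 ≤ k ≤ n; (2) x_i ≥ 0 for all i; (3) x_0 = 1; (4) Σ_{i=0}^n x_i = |C|. Moreover, if d_H(x,y) ≥ d for all distinct x, y ∈ C, then x_i = 0 for i = 1, …, d−1. -/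
open Finset

/-!
Delsarte's linear programming inequalities come from Fourier analysis on `𝔽₂ⁿ`: the
Krawtchouk value `K_k(wt w)` is the sum of the characters `w ↦ (-1)^(∑_{i ∈ B} w_i)` over
the `k`-subsets `B`, because a `k`-subset meeting the support of `w` in `j` points can be
chosen in `C(wt w, j) C(n - wt w, k - j)` ways. As characters are multiplicative,
`|C| ∑_i K_k(i) x_i = ∑_{u,v ∈ C} K_k(d(u,v))` is a sum of squares of character sums over
`C`. The remaining properties are counts: the pairs at distance `0` form the diagonal of
`C × C`, and no two distinct codewords are closer than the minimal distance.
-/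

variable {ι : Type*} [Fintype ι]

def zmodTwoSign (a : ZMod 2) : ℝ := (-1) ^ a.val

lemma zmodTwoSign_add (a b : ZMod 2) :
    zmodTwoSign (a + b) = zmodTwoSign a * zmodTwoSign b := by
  rw [zmodTwoSign, zmodTwoSign, zmodTwoSign, ZMod.val_add, ← neg_one_pow_eq_pow_mod_two, pow_add]

lemma zmodTwoSign_natCast (m : ℕ) : zmodTwoSign m = (-1) ^ m := by
  rw [zmodTwoSign, ZMod.val_natCast, ← neg_one_pow_eq_pow_mod_two]

lemma zmodTwo_sum_eq_card_filter_ne_zero {α : Type*} (s : Finset α) (w : α → ZMod 2) :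
    ∑ i ∈ s, w i = #{i ∈ s | w i ≠ 0} := by
  rw [natCast_card_filter]
  exact sum_congr rfl fun i _ => by generalize w i = a; revert a; decide

lemma union_inter_eq_and_union_sdiff_eq [DecidableEq ι] {A s t : Finset ι}
    (hs : s ⊆ A) (ht : t ⊆ Aᶜ) :
    (s ∪ t) ∩ A = s ∧ (s ∪ t) \ A = t := by
  constructor <;> ext x <;> have := @hs x <;> have := @ht x <;>
    simp only [mem_inter, mem_union, mem_sdiff, mem_compl] at * <;> tauto

theorem card_powersetCard_filter_card_inter_eq [DecidableEq ι] (A : Finset ι) {j k : ℕ}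
    (hjk : j ≤ k) :
    #{B ∈ powersetCard k (univ : Finset ι) | #(A ∩ B) = j} =
      (#A).choose j * (Fintype.card ι - #A).choose (k - j) := by
  rw [← card_compl, ← card_powersetCard, ← card_powersetCard, ← card_product]
  refine card_bij' (fun B _ => (B ∩ A, B \ A)) (fun P _ => P.1 ∪ P.2) ?_ ?_ ?_ ?_
  · intro B hB
    simp only [mem_filter, mem_powersetCard, subset_univ, true_and, mem_product] at hB ⊢
    have := card_inter_add_card_sdiff B A
    rw [inter_comm] at this ⊢
    exact ⟨⟨inter_subset_left, hB.2⟩, fun x hx => by simp_all, by omega⟩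
  · rintro ⟨s, t⟩ hP
    simp only [mem_filter, mem_powersetCard, subset_univ, true_and, mem_product] at hP ⊢
    obtain ⟨⟨hs, hsj⟩, ht, htk⟩ := hP
    have hdisj : Disjoint s t :=
      disjoint_of_subset_left hs (disjoint_of_subset_right ht disjoint_compl_right)
    rw [card_union_of_disjoint hdisj, inter_comm, (union_inter_eq_and_union_sdiff_eq hs ht).1]
    omega
  · intro B _
    rw [union_comm, sdiff_union_inter]
  · rintro ⟨s, t⟩ hP
    simp only [mem_powersetCard, mem_product] at hP
    obtain ⟨h1, h2⟩ := union_inter_eq_and_union_sdiff_eq hP.1.1 hP.2.1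
    simp [h1, h2]

theorem sum_powersetCard_neg_one_pow_card_inter [DecidableEq ι] (A : Finset ι) (k : ℕ) :
    ∑ B ∈ powersetCard k (univ : Finset ι), (-1 : ℝ) ^ #(A ∩ B) =
      krawtchouk (Fintype.card ι) k #A := by
  have hmaps : ∀ B ∈ powersetCard k (univ : Finset ι), #(A ∩ B) ∈ range (k + 1) := fun B hB =>
    mem_range_succ_iff.2 ((card_le_card inter_subset_right).trans (mem_powersetCard.1 hB).2.le)
  rw [← sum_fiberwise_of_maps_to hmaps, krawtchouk]
  refine sum_congr rfl fun j hj => ?_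
  rw [sum_congr rfl fun B hB => by rw [(mem_filter.1 hB).2], sum_const, nsmul_eq_mul,
    card_powersetCard_filter_card_inter_eq A (mem_range_succ_iff.1 hj)]
  push_cast
  ring

theorem sum_powersetCard_zmodTwoSign_sum (w : ι → ZMod 2) (k : ℕ) :
    ∑ B ∈ powersetCard k (univ : Finset ι), zmodTwoSign (∑ i ∈ B, w i) =
      krawtchouk (Fintype.card ι) k (hammingNorm w) := by
  classical
  calc ∑ B ∈ powersetCard k univ, zmodTwoSign (∑ i ∈ B, w i)
      = ∑ B ∈ powersetCard k univ, (-1 : ℝ) ^ #(({i | w i ≠ 0} : Finset ι) ∩ B) :=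
        sum_congr rfl fun B _ => by
          rw [zmodTwo_sum_eq_card_filter_ne_zero, zmodTwoSign_natCast, filter_inter, univ_inter]
    _ = _ := sum_powersetCard_neg_one_pow_card_inter _ k

theorem sum_krawtchouk_hammingDist_eq_sum_sq (C : Finset (ι → ZMod 2)) (k : ℕ) :
    ∑ p ∈ C ×ˢ C, krawtchouk (Fintype.card ι) k (hammingDist p.1 p.2) =
      ∑ B ∈ powersetCard k (univ : Finset ι), (∑ c ∈ C, zmodTwoSign (∑ i ∈ B, c i)) ^ 2 := by
  classical
  have hdist : ∀ u v : ι → ZMod 2, krawtchouk (Fintype.card ι) k (hammingDist u v) =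
      ∑ B ∈ powersetCard k univ, zmodTwoSign (∑ i ∈ B, u i) * zmodTwoSign (∑ i ∈ B, v i) := by
    intro u v
    rw [hammingDist_comm, hammingDist_eq_hammingNorm, neg_add_eq_sub,
      ← sum_powersetCard_zmodTwoSign_sum]
    simp_rw [Pi.sub_apply, sum_sub_distrib, CharTwo.sub_eq_add, zmodTwoSign_add]
  simp_rw [hdist]
  rw [sum_comm]
  simp_rw [sq, sum_mul_sum, sum_product]

section DistanceDistribution

variable {β : Type*} [DecidableEq β]

noncomputable def distanceDistribution (C : Finset (ι → β)) (i : ℕ) : ℝ :=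
  #{p ∈ C ×ˢ C | hammingDist p.1 p.2 = i} / #C

theorem distanceDistribution_nonneg (C : Finset (ι → β)) (i : ℕ) :
    0 ≤ distanceDistribution C i := by
  unfold distanceDistribution
  positivity

theorem distanceDistribution_zero {C : Finset (ι → β)} (hC : C.Nonempty) :
    distanceDistribution C 0 = 1 := by
  have hdiag : {p ∈ C ×ˢ C | hammingDist p.1 p.2 = 0} = C.diag := by
    simp_rw [hammingDist_eq_zero, diag_eq_filter]
  rw [distanceDistribution, hdiag, diag_card, div_self (by exact_mod_cast hC.card_pos.ne')]

theorem distanceDistribution_eq_zero {C : Finset (ι → β)} {d i : ℕ}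
    (hd : ∀ u ∈ C, ∀ v ∈ C, u ≠ v → d ≤ hammingDist u v) (hi : i ≠ 0) (hid : i < d) :
    distanceDistribution C i = 0 := by
  rw [distanceDistribution, filter_eq_empty_iff.2, card_empty, Nat.cast_zero, zero_div]
  intro p hp hpi
  rw [mem_product] at hp
  have hne : p.1 ≠ p.2 := fun h => hi (hpi ▸ hammingDist_eq_zero.2 h)
  have := hd _ hp.1 _ hp.2 hne
  omega

theorem sum_range_mul_distanceDistribution (C : Finset (ι → β)) (f : ℕ → ℝ) :
    ∑ i ∈ range (Fintype.card ι + 1), f i * distanceDistribution C i =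
      (∑ p ∈ C ×ˢ C, f (hammingDist p.1 p.2)) / #C := by
  have hmaps : ∀ p ∈ C ×ˢ C, hammingDist p.1 p.2 ∈ range (Fintype.card ι + 1) :=
    fun _ _ => mem_range_succ_iff.2 hammingDist_le_card_fintype
  rw [← sum_fiberwise_of_maps_to hmaps, sum_div]
  refine sum_congr rfl fun i _ => ?_
  rw [sum_congr rfl fun p hp => by rw [(mem_filter.1 hp).2], sum_const, nsmul_eq_mul,
    distanceDistribution]
  ring

theorem sum_distanceDistribution (C : Finset (ι → β)) :
    ∑ i ∈ range (Fintype.card ι + 1), distanceDistribution C i = #C := by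
  simpa [card_product, mul_self_div_self] using sum_range_mul_distanceDistribution C 1

end DistanceDistribution

theorem sum_krawtchouk_mul_distanceDistribution_nonneg (C : Finset (ι → ZMod 2)) (k : ℕ) :
    0 ≤ ∑ i ∈ range (Fintype.card ι + 1),
      krawtchouk (Fintype.card ι) k i * distanceDistribution C i := by
  rw [sum_range_mul_distanceDistribution, sum_krawtchouk_hammingDist_eq_sum_sq]
  positivity

/-- Properties of the distance distribution
`x_i = (1/|C|)·|{(x,y) ∈ C² : d_H(x,y) = i}|` of a nonempty binary code `C ⊆ H_n`:
the Krawtchouk inequalities, nonnegativity, `x_0 = 1`, `∑ x_i = |C|`, and the vanishing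
`x_i = 0` for `1 ≤ i ≤ d−1` when `C` has minimal distance at least `d`. -/
theorem distance_distribution_properties (n : ℕ) (C : Finset (Fin n → ZMod 2))
    (hC : C.Nonempty) (x : ℕ → ℝ)
    (hx : ∀ i, x i =
      (((C ×ˢ C).filter fun p => hammingDist p.1 p.2 = i).card : ℝ) / (C.card : ℝ)) :
    (∀ k ≤ n, 0 ≤ ∑ i ∈ Finset.range (n + 1), krawtchouk n k i * x i) ∧
    (∀ i, 0 ≤ x i) ∧
    x 0 = 1 ∧
    (∑ i ∈ Finset.range (n + 1), x i) = C.card ∧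
    (∀ d : ℕ, (∀ u ∈ C, ∀ v ∈ C, u ≠ v → d ≤ hammingDist u v) →
      ∀ i, 1 ≤ i → i ≤ d - 1 → x i = 0) := by
  obtain rfl : x = distanceDistribution C := funext hx
  refine ⟨fun k _ => ?_, distanceDistribution_nonneg C, distanceDistribution_zero hC, ?_,
    fun d hd i hi hid => distanceDistribution_eq_zero hd (by omega) (by omega)⟩
  · simpa using sum_krawtchouk_mul_distanceDistribution_nonneg C k
  · simpa using sum_distanceDistribution C
end
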